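/- arXiv:2205.10499 — 4 statements merged into one kernel-verified Lean document; each statement's English description precedes it below -/
import Mathlib

section
/- Suppose the capacity matrix C_max ∈ ℝ_{≥0}^{6×T} is block-constant in the sense that its first three rows are all equal and its last three rows are all equal. If (X*, A*) is an optimal solution of problem (P1), then for every 3×3 permutation matrix Π the pair (ΠX*, A*) is also feasible and optimal; moreover, if N ≥ 1 and Π is a cyclic 3-permutation, then ΠX* ≠ X*, so the set of optimal solutions of (P1) contains at least two distinct elements. -/
open Matrix Complex

/-- The complex unit `e^{iθπ/180}` at angle `θ` degrees. -/
noncomputable def ang (θ : ℝ) : ℂ := Complex.exp ((θ * Real.pi / 180) * Complex.I)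

/-- The matrix `Φ₁` transforming delta phase powers to primary-side line powers. -/
noncomputable def Phi1 : Matrix (Fin 3) (Fin 3) ℂ :=
  !![ang 30, 0, -ang 150;
     -ang 30, ang (-90), 0;
     0, -ang (-90), ang 150]

/-- The matrix `Φ₂` (with turning ratio `n_r`) transforming delta phase powers to
secondary-side line powers. -/
noncomputable def Phi2 (n_r : ℝ) : Matrix (Fin 3) (Fin 3) ℂ :=
  ((n_r : ℂ))⁻¹ • !![ang 30, ang (-90), -2 * ang 150;
     -2 * ang 30, ang (-90), ang 150;
     ang 30, -2 * ang (-90), ang 150]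

/-- `X ∈ 𝒳`: a binary `3 × N` matrix each of whose columns sums to `1`. -/
def memX {N : ℕ} (X : Matrix (Fin 3) (Fin N) ℝ) : Prop :=
  (∀ m i, X m i = 0 ∨ X m i = 1) ∧ ∀ i, (∑ m, X m i) = 1

/-- `A ∈ C_r`: the charger (maximum-rate) constraint. -/
def memCr {N T : ℕ} (r_max : ℝ) (E : Matrix (Fin N) (Fin T) ℝ)
    (A : Matrix (Fin N) (Fin T) ℝ) : Prop :=
  ∀ i j, 0 ≤ A i j ∧ A i j ≤ r_max * E i j

/-- `A ∈ C_d`: the energy-demand constraint. -/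
def memCd {N T : ℕ} (Δ : ℝ) (e : Fin N → ℝ) (A : Matrix (Fin N) (Fin T) ℝ) : Prop :=
  ∀ i, Δ * (∑ j, A i j) ≤ e i

/-- `(X, A) ∈ C_soc`: the network (transformer capacity) constraint. -/
def memCsoc {N T : ℕ} (n_r : ℝ) (Cmax : Matrix (Fin 6) (Fin T) ℝ)
    (X : Matrix (Fin 3) (Fin N) ℝ) (A : Matrix (Fin N) (Fin T) ℝ) : Prop :=
  ∀ (i : Fin 3) (j : Fin T),
    ‖(Phi1 * (X * A).map ((↑) : ℝ → ℂ)) i j‖ ≤ Cmax (Fin.castAdd 3 i) j ∧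
    ‖(Phi2 n_r * (X * A).map ((↑) : ℝ → ℂ)) i j‖ ≤ Cmax (Fin.addNat i 3) j

/-- The feasible set `S` of problem (P1). -/
def feasibleP1 {N T : ℕ} (r_max Δ n_r : ℝ) (E : Matrix (Fin N) (Fin T) ℝ)
    (e : Fin N → ℝ) (Cmax : Matrix (Fin 6) (Fin T) ℝ)
    (X : Matrix (Fin 3) (Fin N) ℝ) (A : Matrix (Fin N) (Fin T) ℝ) : Prop :=
  memX X ∧ memCr r_max E A ∧ memCd Δ e A ∧ memCsoc n_r Cmax X A

/-- The objective `f(A) = -∑_{i,j} A_{i,j}` of problem (P1). -/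
def objF {N T : ℕ} (A : Matrix (Fin N) (Fin T) ℝ) : ℝ := -∑ i, ∑ j, A i j

/-- Feasibility in the relaxed problem (P2) with `M = I_T` and `W = r_max · E`. -/
def feasibleP2 {N T : ℕ} (r_max n_r : ℝ) (E : Matrix (Fin N) (Fin T) ℝ)
    (Cmax : Matrix (Fin 6) (Fin T) ℝ)
    (X : Matrix (Fin 3) (Fin N) ℝ) (P : Matrix (Fin 3) (Fin T) ℝ) : Prop :=
  memX X ∧ (∀ m j, 0 ≤ P m j) ∧ (∀ m j, P m j ≤ r_max * (X * E) m j) ∧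
  ∀ (i : Fin 3) (j : Fin T),
    ‖(Phi1 * P.map ((↑) : ℝ → ℂ)) i j‖ ≤ Cmax (Fin.castAdd 3 i) j ∧
    ‖(Phi2 n_r * P.map ((↑) : ℝ → ℂ)) i j‖ ≤ Cmax (Fin.addNat i 3) j

/-- The objective `g(P) = -∑_{m,j} P_{m,j}` of the relaxed problem (P2). -/
def objG {T : ℕ} (P : Matrix (Fin 3) (Fin T) ℝ) : ℝ := -∑ m, ∑ j, P m j

/-- A `3×3` real permutation matrix. -/
def IsPermMatrix (Pm : Matrix (Fin 3) (Fin 3) ℝ) : Prop :=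
  ∃ σ : Equiv.Perm (Fin 3), Pm = σ.permMatrix ℝ

/-- A `3×3` permutation matrix of a cyclic 3-permutation (a 3-cycle). -/
def IsCyclicPermMatrix (Pm : Matrix (Fin 3) (Fin 3) ℝ) : Prop :=
  ∃ σ : Equiv.Perm (Fin 3), σ.IsThreeCycle ∧ Pm = σ.permMatrix ℝ


/-!
With `α = e^{iπ/6}` and `ω = α⁴` a primitive cube root of unity, `Φ₁ = α K₁ D` and
`Φ₂ = (α / n_r) K₂ D`, where `D = diag(1, ω², ω)` and `K₁, K₂` are real circulant matrices.
So cyclically rotating the three phases of a real input multiplies the output by `ω` and rotates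
it, while a transposition of two phases conjugates the output, up to a unit factor and a
permutation of its entries. These two permutations generate `S₃`, hence permuting the rows of `X`
only permutes the moduli `|(Φₖ X A)ᵢⱼ|` inside each block of three rows of `C_max`; block-constant
capacities make `C_soc` invariant, and `C_r`, `C_d` and `f` do not involve `X`. A 3-cycle moves the
unique `1` of each column of `X`, so `ΠX ≠ X`.
-/

section RowNormSymmetries

variable {n : Type*} [Fintype n]

def rowNormSymmetries (Φ : Matrix n n ℂ) : Subgroup (Equiv.Perm n) where
  carrier := {σ | ∃ τ : Equiv.Perm n, ∀ (v : n → ℝ) (i : n),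
    ‖(Φ *ᵥ fun m => (v (σ m) : ℂ)) i‖ = ‖(Φ *ᵥ fun m => (v m : ℂ)) (τ i)‖}
  one_mem' := ⟨1, fun _ _ => rfl⟩
  mul_mem' := by
    rintro σ₁ σ₂ ⟨τ₁, h₁⟩ ⟨τ₂, h₂⟩
    exact ⟨τ₁ * τ₂, fun v i => (h₂ (v ∘ σ₁) i).trans (h₁ v (τ₂ i))⟩
  inv_mem' := by
    rintro σ ⟨τ, h⟩
    refine ⟨τ⁻¹, fun v i => ?_⟩
    simpa using (h (fun m => v (σ⁻¹ m)) (τ⁻¹ i)).symm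

lemma mem_rowNormSymmetries_of_mulVec_comp {Φ : Matrix n n ℂ} {σ τ : Equiv.Perm n} {c : ℂ}
    (hc : ‖c‖ = 1)
    (h : ∀ v : n → ℝ, (Φ *ᵥ fun m => (v (σ m) : ℂ)) = c • ((Φ *ᵥ fun m => (v m : ℂ)) ∘ τ)) :
    σ ∈ rowNormSymmetries Φ :=
  ⟨τ, fun v i => by simp [h, hc]⟩

lemma mem_rowNormSymmetries_of_mulVec_comp_star {Φ : Matrix n n ℂ} {σ τ : Equiv.Perm n} {c : ℂ}
    (hc : ‖c‖ = 1)
    (h : ∀ v : n → ℝ,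
      (Φ *ᵥ fun m => (v (σ m) : ℂ)) = c • (star (Φ *ᵥ fun m => (v m : ℂ)) ∘ τ)) :
    σ ∈ rowNormSymmetries Φ :=
  ⟨τ, fun v i => by simp [h, hc]⟩

lemma exists_norm_mul_permMatrix_mul_eq [DecidableEq n] {p : Type*} {Φ : Matrix n n ℂ}
    {σ : Equiv.Perm n} (hσ : σ ∈ rowNormSymmetries Φ) (M : Matrix n p ℝ) :
    ∃ τ : Equiv.Perm n, ∀ i j, ‖(Φ * (σ.permMatrix ℝ * M).map ((↑) : ℝ → ℂ)) i j‖ =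
      ‖(Φ * M.map ((↑) : ℝ → ℂ)) (τ i) j‖ := by
  obtain ⟨τ, h⟩ := hσ
  rw [PEquiv.toMatrix_toPEquiv_mul]
  exact ⟨τ, fun i j => h (M · j) i⟩

end RowNormSymmetries

lemma Equiv.Perm.eq_top_of_finRotate_mem_of_swap_mem {n : ℕ}
    {H : Subgroup (Equiv.Perm (Fin (n + 2)))} (hrot : finRotate (n + 2) ∈ H)
    (hswap : Equiv.swap 0 1 ∈ H) : H = ⊤ := by
  have hgen := closure_cycle_adjacent_swap isCycle_finRotate support_finRotate (0 : Fin (n + 2))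
  rw [finRotate_apply, zero_add] at hgen
  rw [eq_top_iff, ← hgen, Subgroup.closure_le]
  rintro _ (rfl | rfl)
  exacts [hrot, hswap]

lemma Equiv.Perm.IsThreeCycle.apply_ne_self {α : Type*} [Fintype α] [DecidableEq α]
    (hα : Fintype.card α = 3) {σ : Equiv.Perm α} (hσ : σ.IsThreeCycle) (a : α) : σ a ≠ a := by
  have hsupp : σ.support = Finset.univ := Finset.eq_univ_of_card _ (hσ.card_support.trans hα.symm)
  exact Equiv.Perm.mem_support.1 (hsupp ▸ Finset.mem_univ a)


lemma ang_add (x y : ℝ) : ang (x + y) = ang x * ang y := by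
  rw [ang, ang, ang, ← Complex.exp_add]
  congr 1
  push_cast
  ring

lemma ang_add_180 (x : ℝ) : ang (x + 180) = -ang x := by
  have h : ang 180 = -1 := by
    rw [ang, ← Complex.exp_pi_mul_I]
    congr 1
    push_cast
    ring
  rw [ang_add, h, mul_neg_one]

lemma ang_nat_mul (k : ℕ) (x : ℝ) : ang (k * x) = ang x ^ k := by
  rw [ang, ang, ← Complex.exp_nat_mul]
  congr 1
  push_cast
  ring

lemma norm_ang (x : ℝ) : ‖ang x‖ = 1 := by
  simp [ang, Complex.norm_exp]

lemma star_ang (x : ℝ) : star (ang x) = ang (-x) := by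
  rw [ang, ang, Complex.star_def, ← Complex.exp_conj]
  congr 1
  simp only [map_mul, map_div₀, Complex.conj_ofReal, Complex.conj_I, map_ofNat]
  push_cast
  ring

local notation "α" => ang 30

lemma ang_thirty_pow_six : α ^ 6 = -1 := by
  rw [← ang_nat_mul, show ((6 : ℕ) : ℝ) * 30 = 0 + 180 by norm_num, ang_add_180]
  simp [ang]

lemma ang_150 : ang 150 = α ^ 5 := by
  rw [← ang_nat_mul]
  norm_num

lemma ang_neg_90 : ang (-90) = -α ^ 3 := by
  rw [← ang_nat_mul, show ((3 : ℕ) : ℝ) * 30 = -90 + 180 by norm_num, ang_add_180, neg_neg]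

lemma star_ang_thirty : star α = -α ^ 5 := by
  rw [star_ang, ← ang_150, show (150 : ℝ) = -30 + 180 by norm_num, ang_add_180, neg_neg]

lemma norm_ang_thirty_pow (k : ℕ) : ‖α ^ k‖ = 1 := by
  rw [norm_pow, norm_ang, one_pow]

lemma Phi1_eq : Phi1 = !![α, 0, -α ^ 5; -α, -α ^ 3, 0; 0, α ^ 3, α ^ 5] := by
  rw [Phi1, ang_150, ang_neg_90, neg_neg]

lemma Phi2_eq (n_r : ℝ) : Phi2 n_r =
    ((n_r : ℂ))⁻¹ • !![α, -α ^ 3, -2 * α ^ 5; -2 * α, -α ^ 3, α ^ 5; α, 2 * α ^ 3, α ^ 5] := by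
  rw [Phi2, ang_150, ang_neg_90]
  ring_nf

lemma rowNormSymmetries_Phi1 : rowNormSymmetries Phi1 = ⊤ := by
  -- each entrywise identity below is a polynomial identity in `α` modulo `α ^ 6 = -1`
  have h6 := ang_thirty_pow_six
  refine Equiv.Perm.eq_top_of_finRotate_mem_of_swap_mem ?_ ?_
  · refine mem_rowNormSymmetries_of_mulVec_comp (τ := finRotate 3) (norm_ang_thirty_pow 4)
      fun v => ?_
    ext i
    fin_cases i <;> simp [Phi1_eq, mulVec, dotProduct, Fin.sum_univ_three] <;> grind
  · refine mem_rowNormSymmetries_of_mulVec_comp_star (τ := Equiv.swap 0 2)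
      (norm_ang_thirty_pow 4) fun v => ?_
    ext i
    fin_cases i <;>
      simp [Phi1_eq, mulVec, dotProduct, Fin.sum_univ_three, Equiv.swap_apply_of_ne_of_ne,
        star_ang_thirty] <;>
      grind

lemma rowNormSymmetries_Phi2 (n_r : ℝ) : rowNormSymmetries (Phi2 n_r) = ⊤ := by
  have h6 := ang_thirty_pow_six
  refine Equiv.Perm.eq_top_of_finRotate_mem_of_swap_mem ?_ ?_
  · refine mem_rowNormSymmetries_of_mulVec_comp (τ := finRotate 3) (norm_ang_thirty_pow 4)
      fun v => ?_
    ext i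
    fin_cases i <;> simp [Phi2_eq, mulVec, dotProduct, Fin.sum_univ_three] <;> grind
  · refine mem_rowNormSymmetries_of_mulVec_comp_star (τ := Equiv.swap 1 2) (c := -α ^ 4)
      (by rw [norm_neg, norm_ang_thirty_pow]) fun v => ?_
    ext i
    fin_cases i <;>
      simp [Phi2_eq, mulVec, dotProduct, Fin.sum_univ_three, Equiv.swap_apply_of_ne_of_ne,
        star_ang_thirty] <;>
      grind

section Feasibility

variable {N T : ℕ}

lemma memX_permMatrix_mul {X : Matrix (Fin 3) (Fin N) ℝ} (hX : memX X)
    (σ : Equiv.Perm (Fin 3)) : memX (σ.permMatrix ℝ * X) := by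
  rw [PEquiv.toMatrix_toPEquiv_mul]
  exact ⟨fun m i => hX.1 (σ m) i, fun i => (Equiv.sum_comp σ (X · i)).trans (hX.2 i)⟩

lemma memCsoc_permMatrix_mul {n_r : ℝ} {Cmax : Matrix (Fin 6) (Fin T) ℝ}
    (hC₁ : ∀ (i i' : Fin 3) (j : Fin T), Cmax (Fin.castAdd 3 i) j = Cmax (Fin.castAdd 3 i') j)
    (hC₂ : ∀ (i i' : Fin 3) (j : Fin T), Cmax (Fin.addNat i 3) j = Cmax (Fin.addNat i' 3) j)
    {X : Matrix (Fin 3) (Fin N) ℝ} {A : Matrix (Fin N) (Fin T) ℝ} (h : memCsoc n_r Cmax X A)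
    (σ : Equiv.Perm (Fin 3)) : memCsoc n_r Cmax (σ.permMatrix ℝ * X) A := by
  obtain ⟨τ₁, h₁⟩ :=
    exists_norm_mul_permMatrix_mul_eq (rowNormSymmetries_Phi1 ▸ Subgroup.mem_top σ) (X * A)
  obtain ⟨τ₂, h₂⟩ :=
    exists_norm_mul_permMatrix_mul_eq (rowNormSymmetries_Phi2 n_r ▸ Subgroup.mem_top σ) (X * A)
  intro i j
  rw [Matrix.mul_assoc, h₁, h₂, hC₁ i (τ₁ i), hC₂ i (τ₂ i)]
  exact ⟨(h _ j).1, (h _ j).2⟩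

lemma feasibleP1_permMatrix_mul {r_max Δ n_r : ℝ} {E : Matrix (Fin N) (Fin T) ℝ} {e : Fin N → ℝ}
    {Cmax : Matrix (Fin 6) (Fin T) ℝ}
    (hC₁ : ∀ (i i' : Fin 3) (j : Fin T), Cmax (Fin.castAdd 3 i) j = Cmax (Fin.castAdd 3 i') j)
    (hC₂ : ∀ (i i' : Fin 3) (j : Fin T), Cmax (Fin.addNat i 3) j = Cmax (Fin.addNat i' 3) j)
    {X : Matrix (Fin 3) (Fin N) ℝ} {A : Matrix (Fin N) (Fin T) ℝ}
    (h : feasibleP1 r_max Δ n_r E e Cmax X A) (σ : Equiv.Perm (Fin 3)) :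
    feasibleP1 r_max Δ n_r E e Cmax (σ.permMatrix ℝ * X) A :=
  ⟨memX_permMatrix_mul h.1 σ, h.2.1, h.2.2.1, memCsoc_permMatrix_mul hC₁ hC₂ h.2.2.2 σ⟩

end Feasibility

lemma permMatrix_mul_ne_self {N : ℕ} {X : Matrix (Fin 3) (Fin N) ℝ} (hX : memX X) (i : Fin N)
    {σ : Equiv.Perm (Fin 3)} (hσ : ∀ m, σ m ≠ m) : σ.permMatrix ℝ * X ≠ X := by
  rw [PEquiv.toMatrix_toPEquiv_mul]
  intro hfix
  obtain ⟨m, hm⟩ : ∃ m, X m i = 1 := by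
    by_contra! hne
    simpa [fun m => (hX.1 m i).resolve_right (hne m)] using hX.2 i
  have hσm : X (σ m) i = 1 := (congrFun (congrFun hfix m) i).trans hm
  have hpair : X m i + X (σ m) i ≤ ∑ k, X k i := by
    rw [← Finset.sum_pair (f := (X · i)) (hσ m).symm]
    refine Finset.sum_le_sum_of_subset_of_nonneg (Finset.subset_univ _) fun k _ _ => ?_
    rcases hX.1 k i with h | h <;> simp [h]
  linarith [hX.2 i]

theorem stmt4_general (N T : ℕ) (hN : 1 ≤ N)
    (r_max Δ n_r : ℝ)
    (E : Matrix (Fin N) (Fin T) ℝ)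
    (e : Fin N → ℝ)
    (Cmax : Matrix (Fin 6) (Fin T) ℝ)
    (hCblock1 : ∀ (i i' : Fin 3) (j : Fin T),
      Cmax (Fin.castAdd 3 i) j = Cmax (Fin.castAdd 3 i') j)
    (hCblock2 : ∀ (i i' : Fin 3) (j : Fin T),
      Cmax (Fin.addNat i 3) j = Cmax (Fin.addNat i' 3) j)
    (Xs : Matrix (Fin 3) (Fin N) ℝ) (As : Matrix (Fin N) (Fin T) ℝ)
    (hfeas : feasibleP1 r_max Δ n_r E e Cmax Xs As)
    (hopt : ∀ X A, feasibleP1 r_max Δ n_r E e Cmax X A → objF As ≤ objF A) :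
    (∀ Pm : Matrix (Fin 3) (Fin 3) ℝ, IsPermMatrix Pm →
      feasibleP1 r_max Δ n_r E e Cmax (Pm * Xs) As ∧
      ∀ X A, feasibleP1 r_max Δ n_r E e Cmax X A → objF As ≤ objF A) ∧
    (∀ Pm : Matrix (Fin 3) (Fin 3) ℝ, IsCyclicPermMatrix Pm → Pm * Xs ≠ Xs) ∧
    (∃ (X₁ : Matrix (Fin 3) (Fin N) ℝ) (A₁ : Matrix (Fin N) (Fin T) ℝ)
       (X₂ : Matrix (Fin 3) (Fin N) ℝ) (A₂ : Matrix (Fin N) (Fin T) ℝ),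
      feasibleP1 r_max Δ n_r E e Cmax X₁ A₁ ∧
      (∀ X A, feasibleP1 r_max Δ n_r E e Cmax X A → objF A₁ ≤ objF A) ∧
      feasibleP1 r_max Δ n_r E e Cmax X₂ A₂ ∧
      (∀ X A, feasibleP1 r_max Δ n_r E e Cmax X A → objF A₂ ≤ objF A) ∧
      (X₁, A₁) ≠ (X₂, A₂)) := by
  have hperm := feasibleP1_permMatrix_mul hCblock1 hCblock2 hfeas
  have hcycle : ∀ σ : Equiv.Perm (Fin 3), σ.IsThreeCycle → σ.permMatrix ℝ * Xs ≠ Xs :=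
    fun σ hσ => permMatrix_mul_ne_self hfeas.1 ⟨0, hN⟩ (hσ.apply_ne_self (Fintype.card_fin 3))
  have hrot : (finRotate 3).IsThreeCycle := card_support_eq_three_iff.mp (by decide)
  refine ⟨?_, ?_, ⟨Xs, As, (finRotate 3).permMatrix ℝ * Xs, As, hfeas, hopt, hperm _, hopt, ?_⟩⟩
  · rintro _ ⟨σ, rfl⟩
    exact ⟨hperm σ, hopt⟩
  · rintro _ ⟨σ, hσ, rfl⟩
    exact hcycle σ hσ
  · exact fun h => hcycle _ hrot (congrArg Prod.fst h).symm

/-- If `C_max` is block-constant (first three rows equal, last three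
rows equal) and `(X*, A*)` is optimal for (P1), then for every permutation matrix `Π`
the pair `(ΠX*, A*)` is also feasible and optimal; moreover, for `N ≥ 1` and `Π` a
cyclic 3-permutation, `ΠX* ≠ X*`, so (P1) has at least two distinct optimal
solutions. -/
theorem stmt4 (N T : ℕ) (hN : 1 ≤ N) (hT : 0 < T)
    (r_max Δ n_r : ℝ) (hr : 0 < r_max) (hΔ : 0 < Δ) (hn : 0 < n_r)
    (E : Matrix (Fin N) (Fin T) ℝ) (hE : ∀ i j, E i j = 0 ∨ E i j = 1)
    (e : Fin N → ℝ) (he : ∀ i, 0 ≤ e i)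
    (Cmax : Matrix (Fin 6) (Fin T) ℝ) (hC : ∀ i j, 0 ≤ Cmax i j)
    (hCblock1 : ∀ (i i' : Fin 3) (j : Fin T),
      Cmax (Fin.castAdd 3 i) j = Cmax (Fin.castAdd 3 i') j)
    (hCblock2 : ∀ (i i' : Fin 3) (j : Fin T),
      Cmax (Fin.addNat i 3) j = Cmax (Fin.addNat i' 3) j)
    (Xs : Matrix (Fin 3) (Fin N) ℝ) (As : Matrix (Fin N) (Fin T) ℝ)
    (hfeas : feasibleP1 r_max Δ n_r E e Cmax Xs As)
    (hopt : ∀ X A, feasibleP1 r_max Δ n_r E e Cmax X A → objF As ≤ objF A) :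
    (∀ Pm : Matrix (Fin 3) (Fin 3) ℝ, IsPermMatrix Pm →
      feasibleP1 r_max Δ n_r E e Cmax (Pm * Xs) As ∧
      ∀ X A, feasibleP1 r_max Δ n_r E e Cmax X A → objF As ≤ objF A) ∧
    (∀ Pm : Matrix (Fin 3) (Fin 3) ℝ, IsCyclicPermMatrix Pm → Pm * Xs ≠ Xs) ∧
    (∃ (X₁ : Matrix (Fin 3) (Fin N) ℝ) (A₁ : Matrix (Fin N) (Fin T) ℝ)
       (X₂ : Matrix (Fin 3) (Fin N) ℝ) (A₂ : Matrix (Fin N) (Fin T) ℝ),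
      feasibleP1 r_max Δ n_r E e Cmax X₁ A₁ ∧
      (∀ X A, feasibleP1 r_max Δ n_r E e Cmax X A → objF A₁ ≤ objF A) ∧
      feasibleP1 r_max Δ n_r E e Cmax X₂ A₂ ∧
      (∀ X A, feasibleP1 r_max Δ n_r E e Cmax X A → objF A₂ ≤ objF A) ∧
      (X₁, A₁) ≠ (X₂, A₂)) :=
  stmt4_general N T hN r_max Δ n_r E e Cmax hCblock1 hCblock2 Xs As hfeas hopt
end

section
/- If (X, A) is feasible for problem (P1), then the aggregated phase power matrix P := XA is feasible for the relaxed problem (P2) with M = I_T and W = r_max·E; that is, P ≥ 0 entrywise, P ≤ r_max·(XE) entrywise, and |(Φ₁P)_{i,j}| ≤ C_max(i,j), |(Φ₂P)_{i,j}| ≤ C_max(i+3,j) for all i ∈ {1,2,3}, j. Moreover g(XA) = f(A), and consequently the optimal value of (P2) is at most the optimal value of (P1): p₂* ≤ p₁*. -/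
open Matrix Complex

/-! Every station is connected to exactly one phase, so `XA` only distributes the rows of `A`
among the three phases: it inherits the bounds of `A` and has the same total. Hence every
value of (P1) is a value of (P2). Comparing the infima needs more, since the real `sInf` of an
empty or unbounded set is `0`: the zero schedule is feasible for (P1), and `P ≤ r_max · XE`
bounds the values of (P2) below. -/

section MatrixEntrywise

variable {l m n : Type*} [Fintype m] {R : Type*}

theorem sum_mul_apply_of_sum_col_eq_one [Fintype l] [NonAssocSemiring R]
    {X : Matrix l m R} (hX : ∀ i, ∑ k, X k i = 1) (A : Matrix m n R) (j : n) :
    ∑ k, (X * A) k j = ∑ i, A i j := by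
  simp only [mul_apply]
  rw [Finset.sum_comm]
  simp only [← Finset.sum_mul, hX, one_mul]

variable [Semiring R] [PartialOrder R] [IsOrderedRing R] {X : Matrix l m R}

theorem mul_apply_nonneg (hX : ∀ k i, 0 ≤ X k i) {A : Matrix m n R}
    (hA : ∀ i j, 0 ≤ A i j) (k : l) (j : n) : 0 ≤ (X * A) k j :=
  Finset.sum_nonneg fun i _ => mul_nonneg (hX k i) (hA i j)

theorem mul_apply_le_mul_apply (hX : ∀ k i, 0 ≤ X k i) {A B : Matrix m n R}
    (hAB : ∀ i j, A i j ≤ B i j) (k : l) (j : n) : (X * A) k j ≤ (X * B) k j :=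
  Finset.sum_le_sum fun i _ => mul_le_mul_of_nonneg_left (hAB i j) (hX k i)

end MatrixEntrywise

section Feasibility

variable {N T : ℕ} {r_max Δ n_r : ℝ} {E : Matrix (Fin N) (Fin T) ℝ} {e : Fin N → ℝ}
  {Cmax : Matrix (Fin 6) (Fin T) ℝ} {X : Matrix (Fin 3) (Fin N) ℝ}

theorem memX.nonneg (hX : memX X) (m : Fin 3) (i : Fin N) : 0 ≤ X m i := by
  rcases hX.1 m i with h | h <;> simp [h]

theorem memX.le_one (hX : memX X) (m : Fin 3) (i : Fin N) : X m i ≤ 1 := by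
  rcases hX.1 m i with h | h <;> simp [h]

theorem memX.mul_apply_le_sum (hX : memX X) (hE : ∀ i j, 0 ≤ E i j) (m : Fin 3) (j : Fin T) :
    (X * E) m j ≤ ∑ i, E i j :=
  (mul_apply (M := X)).trans_le <| Finset.sum_le_sum fun i _ => mul_le_of_le_one_left (hE i j) (hX.le_one m i)

theorem exists_memX : ∃ X : Matrix (Fin 3) (Fin N) ℝ, memX X :=
  ⟨Matrix.of fun m _ => if m = 0 then 1 else 0,
    fun m i => by by_cases h : m = 0 <;> simp [h], fun i => by simp⟩

theorem objG_mul_eq_objF (hX : memX X) (A : Matrix (Fin N) (Fin T) ℝ) :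
    objG (X * A) = objF A := by
  rw [objG, objF, neg_inj]
  refine Finset.sum_comm.trans ?_
  simp only [sum_mul_apply_of_sum_col_eq_one hX.2]
  exact Finset.sum_comm

theorem feasibleP1.feasibleP2_mul {A : Matrix (Fin N) (Fin T) ℝ}
    (h : feasibleP1 r_max Δ n_r E e Cmax X A) : feasibleP2 r_max n_r E Cmax X (X * A) := by
  obtain ⟨hX, hA, -, hsoc⟩ := h
  refine ⟨hX, mul_apply_nonneg hX.nonneg fun i j => (hA i j).1, fun m j => ?_, hsoc⟩
  calc (X * A) m j ≤ (X * (r_max • E)) m j :=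
        mul_apply_le_mul_apply hX.nonneg (fun i j => (hA i j).2) m j
    _ = r_max * (X * E) m j := by rw [Matrix.mul_smul, Matrix.smul_apply, smul_eq_mul]

theorem feasibleP1_zero (hr : 0 ≤ r_max) (hE : ∀ i j, 0 ≤ E i j) (he : ∀ i, 0 ≤ e i)
    (hC : ∀ i j, 0 ≤ Cmax i j) (hX : memX X) : feasibleP1 r_max Δ n_r E e Cmax X 0 := by
  refine ⟨hX, fun i j => ⟨le_rfl, mul_nonneg hr (hE i j)⟩, fun i => by simpa using he i,
    fun i j => ?_⟩
  simp only [Matrix.mul_zero, Matrix.map_zero _ Complex.ofReal_zero, Matrix.zero_apply,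
    norm_zero]
  exact ⟨hC _ _, hC _ _⟩

theorem bddBelow_objG_feasibleP2 (hr : 0 ≤ r_max) (hE : ∀ i j, 0 ≤ E i j) :
    BddBelow {v : ℝ | ∃ (X : Matrix (Fin 3) (Fin N) ℝ) (P : Matrix (Fin 3) (Fin T) ℝ),
      feasibleP2 r_max n_r E Cmax X P ∧ v = objG P} := by
  refine ⟨-∑ _m : Fin 3, ∑ j, r_max * ∑ i, E i j, ?_⟩
  rintro _ ⟨X, P, ⟨hX, -, hPE, -⟩, rfl⟩
  refine neg_le_neg <| Finset.sum_le_sum fun m _ => Finset.sum_le_sum fun j _ => ?_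
  exact (hPE m j).trans (mul_le_mul_of_nonneg_left (hX.mul_apply_le_sum hE m j) hr)

end Feasibility

theorem stmt6_general (N T : ℕ)
    (r_max Δ n_r : ℝ) (hr : 0 < r_max)
    (E : Matrix (Fin N) (Fin T) ℝ) (hE : ∀ i j, E i j = 0 ∨ E i j = 1)
    (e : Fin N → ℝ) (he : ∀ i, 0 ≤ e i)
    (Cmax : Matrix (Fin 6) (Fin T) ℝ) (hC : ∀ i j, 0 ≤ Cmax i j) :
    (∀ (X : Matrix (Fin 3) (Fin N) ℝ) (A : Matrix (Fin N) (Fin T) ℝ),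
      feasibleP1 r_max Δ n_r E e Cmax X A →
        feasibleP2 r_max n_r E Cmax X (X * A) ∧ objG (X * A) = objF A) ∧
    sInf {v : ℝ | ∃ (X : Matrix (Fin 3) (Fin N) ℝ) (P : Matrix (Fin 3) (Fin T) ℝ),
        feasibleP2 r_max n_r E Cmax X P ∧ v = objG P}
      ≤ sInf {v : ℝ | ∃ (X : Matrix (Fin 3) (Fin N) ℝ) (A : Matrix (Fin N) (Fin T) ℝ),
        feasibleP1 r_max Δ n_r E e Cmax X A ∧ v = objF A} := by
  have hE₀ : ∀ i j, 0 ≤ E i j := fun i j => by rcases hE i j with h | h <;> simp [h]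
  have relax : ∀ X A, feasibleP1 r_max Δ n_r E e Cmax X A →
      feasibleP2 r_max n_r E Cmax X (X * A) ∧ objG (X * A) = objF A :=
    fun X A h => ⟨h.feasibleP2_mul, objG_mul_eq_objF h.1 A⟩
  obtain ⟨X₀, hX₀⟩ := exists_memX (N := N)
  refine ⟨relax, csInf_le_csInf (bddBelow_objG_feasibleP2 hr.le hE₀)
    ⟨_, X₀, 0, feasibleP1_zero hr.le hE₀ he hC hX₀, rfl⟩ ?_⟩
  rintro _ ⟨X, A, h, rfl⟩
  exact ⟨X, X * A, (relax X A h).1, (relax X A h).2.symm⟩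

/-- If `(X, A)` is feasible for (P1), then `P := XA` is feasible for
the relaxed problem (P2) with `M = I_T`, `W = r_max·E`, with `g(XA) = f(A)`; and
consequently `p₂* ≤ p₁*`. -/
theorem stmt6 (N T : ℕ) (hN : 0 < N) (hT : 0 < T)
    (r_max Δ n_r : ℝ) (hr : 0 < r_max) (hΔ : 0 < Δ) (hn : 0 < n_r)
    (E : Matrix (Fin N) (Fin T) ℝ) (hE : ∀ i j, E i j = 0 ∨ E i j = 1)
    (e : Fin N → ℝ) (he : ∀ i, 0 ≤ e i)
    (Cmax : Matrix (Fin 6) (Fin T) ℝ) (hC : ∀ i j, 0 ≤ Cmax i j) :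
    (∀ (X : Matrix (Fin 3) (Fin N) ℝ) (A : Matrix (Fin N) (Fin T) ℝ),
      feasibleP1 r_max Δ n_r E e Cmax X A →
        feasibleP2 r_max n_r E Cmax X (X * A) ∧ objG (X * A) = objF A) ∧
    sInf {v : ℝ | ∃ (X : Matrix (Fin 3) (Fin N) ℝ) (P : Matrix (Fin 3) (Fin T) ℝ),
        feasibleP2 r_max n_r E Cmax X P ∧ v = objG P}
      ≤ sInf {v : ℝ | ∃ (X : Matrix (Fin 3) (Fin N) ℝ) (A : Matrix (Fin N) (Fin T) ℝ),
        feasibleP1 r_max Δ n_r E e Cmax X A ∧ v = objF A} :=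
  stmt6_general N T r_max Δ n_r hr E hE e he Cmax hC
end

section
/- Let X ∈ 𝒳 and let P ∈ ℝ^{3×T} satisfy 0 ≤ P and P ≤ r_max·(XE) entrywise. Then there exists a charging matrix A ∈ ℝ^{N×T} with 0 ≤ A_{i,j} ≤ r_max·E_{i,j} for all i, j (i.e., A ∈ C_r) such that XA = P. (Such an A can be obtained by splitting P_{m,j} equally among the EVs assigned to phase m that are present at time j.) -/
open Matrix Complex

/-! A matrix in `𝒳` is the assignment matrix of a map `φ` sending each EV to its
phase, so `(X A)_{m,j}` sums `A_{i,j}` over the EVs on phase `m`.  Split `P_{m,j}` among those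
EVs in proportion to `E_{i,j}`; the shares add up to `P_{m,j}`, and since
`P_{m,j} ≤ r_max ∑_{φ i = m} E_{i,j}`, each share is at most `r_max E_{i,j}`. -/

section ProportionalSplit

variable {ι κ τ R : Type*} [Fintype ι] [DecidableEq κ]

def assignMatrix [Zero R] [One R] (φ : ι → κ) : Matrix κ ι R :=
  Matrix.of fun m i => if φ i = m then 1 else 0

theorem assignMatrix_mul_apply [NonAssocSemiring R] (φ : ι → κ) (A : Matrix ι τ R)
    (m : κ) (j : τ) : ((assignMatrix φ : Matrix κ ι R) * A) m j = ∑ i with φ i = m, A i j := by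
  simp only [assignMatrix, mul_apply, of_apply, ite_mul, one_mul, zero_mul, Finset.sum_filter]

variable [Field R]

/-- For a 0/1 matrix `E` this is the paper's equal split among the EVs present. -/
def proportionalSplit (φ : ι → κ) (E : Matrix ι τ R) (P : Matrix κ τ R) : Matrix ι τ R :=
  Matrix.of fun i j => E i j * (P (φ i) j / ∑ i' with φ i' = φ i, E i' j)

variable {φ : ι → κ} {E : Matrix ι τ R} {P : Matrix κ τ R}

theorem sum_fiber_proportionalSplit (hzero : ∀ m j, ∑ i with φ i = m, E i j = 0 → P m j = 0)
    (m : κ) (j : τ) : ∑ i with φ i = m, proportionalSplit φ E P i j = P m j := by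
  calc ∑ i with φ i = m, proportionalSplit φ E P i j
      = ∑ i with φ i = m, E i j * (P m j / ∑ i' with φ i' = m, E i' j) :=
        Finset.sum_congr rfl fun i hi => by
          rw [proportionalSplit, of_apply, (Finset.mem_filter.1 hi).2]
    _ = P m j := by rw [← Finset.sum_mul, mul_div_cancel_of_imp' (hzero m j)]

variable [LinearOrder R] [IsStrictOrderedRing R]

theorem proportionalSplit_nonneg (hE : ∀ i j, 0 ≤ E i j) (hP : ∀ m j, 0 ≤ P m j) (i : ι) (j : τ) :
    0 ≤ proportionalSplit φ E P i j :=
  mul_nonneg (hE i j) (div_nonneg (hP _ j) (Finset.sum_nonneg fun i' _ => hE i' j))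

theorem proportionalSplit_le {r : R} (hE : ∀ i j, 0 ≤ E i j)
    (hPle : ∀ m j, P m j ≤ r * ∑ i with φ i = m, E i j) (i : ι) (j : τ) :
    proportionalSplit φ E P i j ≤ r * E i j := by
  rcases (hE i j).eq_or_lt with hEij | hEij
  · simp [proportionalSplit, ← hEij]
  have hfiber : 0 < ∑ i' with φ i' = φ i, E i' j :=
    hEij.trans_le <| Finset.single_le_sum (fun i' _ => hE i' j) (by simp)
  rw [proportionalSplit, of_apply, mul_comm r]
  exact mul_le_mul_of_nonneg_left ((div_le_iff₀ hfiber).2 (hPle _ j)) hEij.le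

end ProportionalSplit

theorem exists_eq_ite_of_sum_eq_one {κ : Type*} [Fintype κ] [DecidableEq κ] {f : κ → ℝ}
    (h01 : ∀ k, f k = 0 ∨ f k = 1) (hsum : ∑ k, f k = 1) :
    ∃ k, ∀ m, f m = if k = m then 1 else 0 := by
  obtain ⟨k, -, hk⟩ := Finset.exists_ne_zero_of_sum_ne_zero (hsum.trans_ne one_ne_zero)
  have hfk : f k = 1 := (h01 k).resolve_left hk
  have hrest : ∑ m ∈ Finset.univ.erase k, f m = 0 := by
    linarith [Finset.add_sum_erase Finset.univ f (Finset.mem_univ k)]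
  have hnonneg : ∀ m, 0 ≤ f m := fun m => by rcases h01 m with h | h <;> simp [h]
  refine ⟨k, fun m => ?_⟩
  split_ifs with hkm
  · rw [← hkm, hfk]
  · exact (Finset.sum_eq_zero_iff_of_nonneg fun m _ => hnonneg m).1 hrest m
      (Finset.mem_erase.2 ⟨Ne.symm hkm, Finset.mem_univ m⟩)

theorem memX.exists_eq_assignMatrix {N : ℕ} {X : Matrix (Fin 3) (Fin N) ℝ} (hX : memX X) :
    ∃ φ : Fin N → Fin 3, X = assignMatrix φ := by
  choose φ hφ using fun i => exists_eq_ite_of_sum_eq_one (hX.1 · i) (hX.2 i)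
  exact ⟨φ, Matrix.ext fun m i => hφ i m⟩

theorem stmt7_general (N T : ℕ)
    (r_max : ℝ)
    (E : Matrix (Fin N) (Fin T) ℝ) (hE : ∀ i j, E i j = 0 ∨ E i j = 1)
    (X : Matrix (Fin 3) (Fin N) ℝ) (hX : memX X)
    (P : Matrix (Fin 3) (Fin T) ℝ) (hP0 : ∀ m j, 0 ≤ P m j)
    (hPle : ∀ m j, P m j ≤ r_max * (X * E) m j) :
    ∃ A : Matrix (Fin N) (Fin T) ℝ, memCr r_max E A ∧ X * A = P := by
  obtain ⟨φ, rfl⟩ := hX.exists_eq_assignMatrix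
  have hEnn : ∀ i j, 0 ≤ E i j := fun i j => by rcases hE i j with h | h <;> simp [h]
  simp only [assignMatrix_mul_apply] at hPle
  refine ⟨proportionalSplit φ E P,
    fun i j => ⟨proportionalSplit_nonneg hEnn hP0 i j, proportionalSplit_le hEnn hPle i j⟩,
    Matrix.ext fun m j => ?_⟩
  rw [assignMatrix_mul_apply]
  refine sum_fiber_proportionalSplit (fun m j hs => le_antisymm ?_ (hP0 m j)) m j
  simpa [hs] using hPle m j

/-- For `X ∈ 𝒳` and `0 ≤ P ≤ r_max·(XE)` entrywise, there is a
charging matrix `A ∈ C_r` with `XA = P`. -/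
theorem stmt7 (N T : ℕ) (hN : 0 < N) (hT : 0 < T)
    (r_max : ℝ) (hr : 0 < r_max)
    (E : Matrix (Fin N) (Fin T) ℝ) (hE : ∀ i j, E i j = 0 ∨ E i j = 1)
    (X : Matrix (Fin 3) (Fin N) ℝ) (hX : memX X)
    (P : Matrix (Fin 3) (Fin T) ℝ) (hP0 : ∀ m j, 0 ≤ P m j)
    (hPle : ∀ m j, P m j ≤ r_max * (X * E) m j) :
    ∃ A : Matrix (Fin N) (Fin T) ℝ, memCr r_max E A ∧ X * A = P :=
  stmt7_general N T r_max E hE X hX P hP0 hPle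
end

section
/- (Global optimality in the zero-laxity case.) Assume the zero-laxity condition r_max·Δ_T·Σ_{j=1}^T E_{i,j} = e_i for every i. If (X, P*) is an optimal solution of the relaxed problem (P2) with M = I_T and W = r_max·E, then there exists A ∈ ℝ^{N×T} with XA = P* such that (X, A) is feasible for problem (P1) and f(A) = p₁*; in particular X is an optimal phase-selection matrix for (P1), i.e., X ∈ 𝒳*. -/
open Matrix Complex

/-!
Under zero laxity the demand constraint `C_d` follows from the rate constraint `C_r`, so (P1)
only bounds each rate by `r_max·E`. Because every charger sits on exactly one phase, a phase
power `P ≤ r_max·(XE)` can be split among the chargers on each phase proportionally to their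
availability, `A_{ij} = (P_{mj} / (XE)_{mj}) E_{ij}` for `i` on phase `m`; this gives a (P1)-feasible
`A` with `XA = P` and `f(A) = g(P)`. Conversely `(X', A') ↦ (X', X'A')` maps (P1)-feasible points to
(P2)-feasible ones preserving the objective, so `f(A) = g(P*) ≤ p₁*`.
-/

namespace memX

variable {N : ℕ} {X : Matrix (Fin 3) (Fin N) ℝ}

lemma nonneg_s8 (hX : memX X) (m : Fin 3) (i : Fin N) : 0 ≤ X m i := by
  rcases hX.1 m i with h | h <;> simp [h]

lemma mul_apply_nonneg {κ : Type*} (hX : memX X) {B : Matrix (Fin N) κ ℝ}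
    (hB : ∀ i j, 0 ≤ B i j) (m : Fin 3) (j : κ) : 0 ≤ (X * B) m j := by
  rw [Matrix.mul_apply]
  exact Finset.sum_nonneg fun i _ => mul_nonneg (hX.nonneg_s8 m i) (hB i j)

lemma mul_apply_eq_ite (hX : memX X) (i : Fin N) (m m' : Fin 3) :
    X m i * X m' i = if m = m' then X m i else 0 := by
  split_ifs with hm
  · subst hm
    rcases hX.1 m i with h | h <;> simp [h]
  · by_contra hne
    have h1 : X m i = 1 := (hX.1 m i).resolve_left (left_ne_zero_of_mul hne)
    have h2 : X m' i = 1 := (hX.1 m' i).resolve_left (right_ne_zero_of_mul hne)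
    have hpair : X m i + X m' i ≤ ∑ k, X k i := by
      rw [← Finset.sum_pair (f := fun k => X k i) hm]
      exact Finset.sum_le_sum_of_subset_of_nonneg (Finset.subset_univ _)
        fun k _ _ => hX.nonneg_s8 k i
    rw [hX.2 i, h1, h2] at hpair
    norm_num at hpair

lemma sum_sum_mul {κ : Type*} [Fintype κ] (hX : memX X) (A : Matrix (Fin N) κ ℝ) :
    ∑ m, ∑ j, (X * A) m j = ∑ i, ∑ j, A i j := by
  simp only [Matrix.mul_apply]
  calc ∑ m, ∑ j, ∑ i, X m i * A i j = ∑ j, ∑ i, ∑ m, X m i * A i j := by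
        rw [Finset.sum_comm]; exact Finset.sum_congr rfl fun j _ => Finset.sum_comm
    _ = ∑ i, ∑ j, A i j := by
        rw [Finset.sum_comm]
        simp only [← Finset.sum_mul, hX.2, one_mul]

lemma mul_hadamard_transpose_mul {κ : Type*} (hX : memX X) (C : Matrix (Fin 3) κ ℝ)
    (E : Matrix (Fin N) κ ℝ) : X * ((Xᵀ * C) ⊙ E) = C ⊙ (X * E) := by
  ext m j
  have hrow : ∀ i, X m i * (Xᵀ * C) i j = X m i * C m j := fun i => by
    simp only [Matrix.mul_apply, Matrix.transpose_apply, Finset.mul_sum, ← mul_assoc,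
      hX.mul_apply_eq_ite, ite_mul, zero_mul, Finset.sum_ite_eq, Finset.mem_univ, if_true]
  rw [Matrix.hadamard_apply, Matrix.mul_apply, Matrix.mul_apply, Finset.mul_sum]
  refine Finset.sum_congr rfl fun i _ => ?_
  rw [Matrix.hadamard_apply, ← mul_assoc, hrow]
  ring

end memX

lemma objG_mul {N T : ℕ} {X : Matrix (Fin 3) (Fin N) ℝ} (hX : memX X)
    (A : Matrix (Fin N) (Fin T) ℝ) : objG (X * A) = objF A := by
  rw [objG, objF, hX.sum_sum_mul]

lemma feasibleP2_mul_of_feasibleP1 {N T : ℕ} {r_max Δ n_r : ℝ}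
    {E : Matrix (Fin N) (Fin T) ℝ} {e : Fin N → ℝ} {Cmax : Matrix (Fin 6) (Fin T) ℝ}
    {X : Matrix (Fin 3) (Fin N) ℝ} {A : Matrix (Fin N) (Fin T) ℝ}
    (h : feasibleP1 r_max Δ n_r E e Cmax X A) :
    feasibleP2 r_max n_r E Cmax X (X * A) := by
  obtain ⟨hX, hCr, -, hsoc⟩ := h
  refine ⟨hX, fun m j => ?_, fun m j => ?_, hsoc⟩
  · exact hX.mul_apply_nonneg (fun i j => (hCr i j).1) m j
  · simp only [Matrix.mul_apply, Finset.mul_sum]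
    refine Finset.sum_le_sum fun i _ => ?_
    nlinarith [hX.nonneg_s8 m i, (hCr i j).2]

lemma memCd_of_memCr {N T : ℕ} {r_max Δ : ℝ} (hΔ : 0 ≤ Δ) {E : Matrix (Fin N) (Fin T) ℝ}
    {e : Fin N → ℝ} (hzl : ∀ i, r_max * Δ * (∑ j, E i j) = e i)
    {A : Matrix (Fin N) (Fin T) ℝ} (hA : memCr r_max E A) : memCd Δ e A := fun i =>
  calc Δ * ∑ j, A i j ≤ Δ * ∑ j, r_max * E i j :=
        mul_le_mul_of_nonneg_left (Finset.sum_le_sum fun j _ => (hA i j).2) hΔ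
    _ = e i := by rw [← hzl i, ← Finset.mul_sum]; ring

/-- Where `(XE)_{mj} = 0` the division gives `0`, which is harmless since then `P_{mj} = 0`. -/
noncomputable def disaggregate {N T : ℕ} (X : Matrix (Fin 3) (Fin N) ℝ)
    (E : Matrix (Fin N) (Fin T) ℝ) (P : Matrix (Fin 3) (Fin T) ℝ) : Matrix (Fin N) (Fin T) ℝ :=
  (Xᵀ * Matrix.of fun m j => P m j / (X * E) m j) ⊙ E

section disaggregate

variable {N T : ℕ} {r_max : ℝ} {E : Matrix (Fin N) (Fin T) ℝ}
  {X : Matrix (Fin 3) (Fin N) ℝ} {P : Matrix (Fin 3) (Fin T) ℝ}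

lemma mul_disaggregate (hX : memX X) (hP0 : ∀ m j, 0 ≤ P m j)
    (hPE : ∀ m j, P m j ≤ r_max * (X * E) m j) : X * disaggregate X E P = P := by
  rw [disaggregate, hX.mul_hadamard_transpose_mul]
  ext m j
  refine div_mul_cancel_of_imp fun h => ?_
  have := hPE m j
  rw [h, mul_zero] at this
  exact le_antisymm this (hP0 m j)

lemma memCr_disaggregate (hr : 0 ≤ r_max) (hE : ∀ i j, 0 ≤ E i j) (hX : memX X)
    (hP0 : ∀ m j, 0 ≤ P m j) (hPE : ∀ m j, P m j ≤ r_max * (X * E) m j) :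
    memCr r_max E (disaggregate X E P) := by
  have hXE : ∀ m j, 0 ≤ (X * E) m j := hX.mul_apply_nonneg hE
  have hrate0 : ∀ m j, 0 ≤ P m j / (X * E) m j := fun m j => div_nonneg (hP0 m j) (hXE m j)
  have hrate : ∀ m j, P m j / (X * E) m j ≤ r_max := fun m j => by
    rcases (hXE m j).eq_or_lt with h | h
    · rw [← h, div_zero]; exact hr
    · exact (div_le_iff₀ h).2 (hPE m j)
  intro i j
  simp only [disaggregate, Matrix.hadamard_apply, Matrix.mul_apply, Matrix.transpose_apply,
    Matrix.of_apply]
  refine ⟨mul_nonneg (Finset.sum_nonneg fun m _ => mul_nonneg (hX.nonneg_s8 m i) (hrate0 m j))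
    (hE i j), mul_le_mul_of_nonneg_right ?_ (hE i j)⟩
  calc ∑ m, X m i * (P m j / (X * E) m j) ≤ ∑ m, X m i * r_max :=
        Finset.sum_le_sum fun m _ => mul_le_mul_of_nonneg_left (hrate m j) (hX.nonneg_s8 m i)
    _ = r_max := by rw [← Finset.sum_mul, hX.2 i, one_mul]

end disaggregate

theorem stmt8_general (N T : ℕ)
    (r_max Δ n_r : ℝ) (hr : 0 < r_max) (hΔ : 0 < Δ)
    (E : Matrix (Fin N) (Fin T) ℝ) (hE : ∀ i j, E i j = 0 ∨ E i j = 1)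
    (e : Fin N → ℝ)
    (Cmax : Matrix (Fin 6) (Fin T) ℝ)
    (hzl : ∀ i, r_max * Δ * (∑ j, E i j) = e i)
    (X : Matrix (Fin 3) (Fin N) ℝ) (Ps : Matrix (Fin 3) (Fin T) ℝ)
    (hfeas2 : feasibleP2 r_max n_r E Cmax X Ps)
    (hopt2 : ∀ (X' : Matrix (Fin 3) (Fin N) ℝ) (P' : Matrix (Fin 3) (Fin T) ℝ),
      feasibleP2 r_max n_r E Cmax X' P' → objG Ps ≤ objG P') :
    ∃ A : Matrix (Fin N) (Fin T) ℝ, X * A = Ps ∧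
      feasibleP1 r_max Δ n_r E e Cmax X A ∧
      (∀ (X' : Matrix (Fin 3) (Fin N) ℝ) (A' : Matrix (Fin N) (Fin T) ℝ),
        feasibleP1 r_max Δ n_r E e Cmax X' A' → objF A ≤ objF A') ∧
      objF A = sInf {v : ℝ | ∃ (X' : Matrix (Fin 3) (Fin N) ℝ)
          (A' : Matrix (Fin N) (Fin T) ℝ),
        feasibleP1 r_max Δ n_r E e Cmax X' A' ∧ v = objF A'} := by
  obtain ⟨hX, hP0, hPE, hsoc⟩ := hfeas2
  have hE0 : ∀ i j, 0 ≤ E i j := fun i j => by rcases hE i j with h | h <;> simp [h]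
  set A := disaggregate X E Ps
  have hXA : X * A = Ps := mul_disaggregate hX hP0 hPE
  have hCr : memCr r_max E A := memCr_disaggregate hr.le hE0 hX hP0 hPE
  have hfeas1 : feasibleP1 r_max Δ n_r E e Cmax X A :=
    ⟨hX, hCr, memCd_of_memCr hΔ.le hzl hCr, by rw [memCsoc, hXA]; exact hsoc⟩
  have hopt1 : ∀ (X' : Matrix (Fin 3) (Fin N) ℝ) (A' : Matrix (Fin N) (Fin T) ℝ),
      feasibleP1 r_max Δ n_r E e Cmax X' A' → objF A ≤ objF A' := fun X' A' h => by
    rw [← objG_mul hX, hXA, ← objG_mul h.1]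
    exact hopt2 X' _ (feasibleP2_mul_of_feasibleP1 h)
  refine ⟨A, hXA, hfeas1, hopt1, (IsLeast.csInf_eq ?_).symm⟩
  refine ⟨⟨X, A, hfeas1, rfl⟩, ?_⟩
  rintro _ ⟨X', A', h, rfl⟩
  exact hopt1 X' A' h

/-- **Global optimality in the zero-laxity case.** Under zero laxity,
if `(X, P*)` is optimal for the relaxed problem (P2) with `M = I_T`, `W = r_max·E`,
then there is `A` with `XA = P*` such that `(X, A)` is feasible for (P1) and
`f(A) = p₁*`; in particular `X ∈ 𝒳*`. -/
theorem stmt8 (N T : ℕ) (hN : 0 < N) (hT : 0 < T)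
    (r_max Δ n_r : ℝ) (hr : 0 < r_max) (hΔ : 0 < Δ) (hn : 0 < n_r)
    (E : Matrix (Fin N) (Fin T) ℝ) (hE : ∀ i j, E i j = 0 ∨ E i j = 1)
    (e : Fin N → ℝ) (he : ∀ i, 0 ≤ e i)
    (Cmax : Matrix (Fin 6) (Fin T) ℝ) (hC : ∀ i j, 0 ≤ Cmax i j)
    (hzl : ∀ i, r_max * Δ * (∑ j, E i j) = e i)
    (X : Matrix (Fin 3) (Fin N) ℝ) (Ps : Matrix (Fin 3) (Fin T) ℝ)
    (hfeas2 : feasibleP2 r_max n_r E Cmax X Ps)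
    (hopt2 : ∀ (X' : Matrix (Fin 3) (Fin N) ℝ) (P' : Matrix (Fin 3) (Fin T) ℝ),
      feasibleP2 r_max n_r E Cmax X' P' → objG Ps ≤ objG P') :
    ∃ A : Matrix (Fin N) (Fin T) ℝ, X * A = Ps ∧
      feasibleP1 r_max Δ n_r E e Cmax X A ∧
      (∀ (X' : Matrix (Fin 3) (Fin N) ℝ) (A' : Matrix (Fin N) (Fin T) ℝ),
        feasibleP1 r_max Δ n_r E e Cmax X' A' → objF A ≤ objF A') ∧
      objF A = sInf {v : ℝ | ∃ (X' : Matrix (Fin 3) (Fin N) ℝ)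
          (A' : Matrix (Fin N) (Fin T) ℝ),
        feasibleP1 r_max Δ n_r E e Cmax X' A' ∧ v = objF A'} :=
  stmt8_general N T r_max Δ n_r hr hΔ E hE e Cmax hzl X Ps hfeas2 hopt2
end
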